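/- arXiv:2403.12941 — 4 statements merged into one kernel-verified Lean document; each statement's English description precedes it below -/
import Mathlib

section
/- If B is a Sinaĭ excursion of length 4n, then the set T of its times before down steps is a subset of {1, 2, …, 4n-1} of size 2n whose sum is congruent to 3n modulo 4n (in fact ∑_{t∈T} t = n(4n-1)). -/
/-- If `S` is a Sinaĭ excursion of length `4n`, then the set `T` of its times
before down steps is a subset of `{1,…,4n-1}` of size `2n` whose sum is
`n(4n-1)`, which is congruent to `3n` modulo `4n`. -/
theorem stmt_2 (n : ℕ) (hn : 1 ≤ n) (S : ℕ → ℤ)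
    (h0 : S 0 = 0) (hend : S (4 * n) = 0)
    (hstep : ∀ k < 4 * n, S (k + 1) - S k = 1 ∨ S (k + 1) - S k = -1)
    (A : ℕ → ℤ) (hA : ∀ k, A k = ∑ i ∈ Finset.Icc 1 k, S i)
    (hpos : ∀ k, 1 ≤ k → k ≤ 4 * n → 0 ≤ A k) (hA0 : A (4 * n) = 0)
    (T : Finset ℕ)
    (hT : T = (Finset.range (4 * n)).filter (fun t => S (t + 1) - S t = -1)) :
    T ⊆ Finset.Icc 1 (4 * n - 1) ∧ T.card = 2 * n ∧
      (∑ t ∈ T, t) = n * (4 * n - 1) ∧ (∑ t ∈ T, t) ≡ 3 * n [MOD 4 * n] := by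
  have h4n : 0 < 4 * n := by omega
  set T' : Finset ℕ :=
    (Finset.range (4 * n)).filter (fun t => ¬ (S (t + 1) - S t = -1)) with hT'
  -- S 1 = 1
  have hS1 : S 1 = 1 := by
    have h1 := hpos 1 le_rfl (by omega)
    rw [hA] at h1
    simp at h1
    have h2 := hstep 0 h4n
    rw [h0] at h2
    norm_num at h2
    rcases h2 with h | h
    · exact h
    · omega
  -- telescoping : sum of increments
  have htel : ∑ k ∈ Finset.range (4 * n), (S (k + 1) - S k) = 0 := by
    rw [Finset.sum_range_sub S, hend, h0, sub_zero]
  -- weighted telescoping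
  have hw : ∑ k ∈ Finset.range (4 * n), (k : ℤ) * (S (k + 1) - S k) = 0 := by
    have h1 : ∑ k ∈ Finset.range (4 * n),
        (((k + 1 : ℕ) : ℤ) * S (k + 1) - (k : ℤ) * S k)
        = ((4 * n : ℕ) : ℤ) * S (4 * n) - (0 : ℤ) * S 0 :=
      Finset.sum_range_sub (fun k => (k : ℤ) * S k) (4 * n)
    have h2 : ∑ i ∈ Finset.Icc 1 (4 * n), S i
        = ∑ k ∈ Finset.range (4 * n), S (k + 1) := by
      rw [show Finset.Icc 1 (4 * n) = Finset.Ico 1 (4 * n + 1) by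
        ext x; simp [Finset.mem_Icc, Finset.mem_Ico]]
      rw [Finset.sum_Ico_eq_sum_range]
      apply Finset.sum_congr (by congr 1)
      intro k _; rw [add_comm]
    have h3 : A (4 * n) = ∑ k ∈ Finset.range (4 * n), S (k + 1) := by
      rw [hA, h2]
    calc ∑ k ∈ Finset.range (4 * n), (k : ℤ) * (S (k + 1) - S k)
        = ∑ k ∈ Finset.range (4 * n),
            ((((k + 1 : ℕ) : ℤ) * S (k + 1) - (k : ℤ) * S k) - S (k + 1)) := by
          apply Finset.sum_congr rfl; intro k _; push_cast; ring
      _ = (∑ k ∈ Finset.range (4 * n),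
            (((k + 1 : ℕ) : ℤ) * S (k + 1) - (k : ℤ) * S k))
          - ∑ k ∈ Finset.range (4 * n), S (k + 1) := by
          rw [Finset.sum_sub_distrib]
      _ = 0 := by rw [h1, ← h3, hA0, hend]; ring
  -- split the plain telescoping sum over T and T'
  have hsplit1 : (∑ k ∈ T, (S (k + 1) - S k)) + (∑ k ∈ T', (S (k + 1) - S k))
      = ∑ k ∈ Finset.range (4 * n), (S (k + 1) - S k) := by
    rw [hT, hT']
    exact Finset.sum_filter_add_sum_filter_not _ _ _
  have hTe : ∑ k ∈ T, (S (k + 1) - S k) = -(T.card : ℤ) := by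
    have he : ∑ k ∈ T, (S (k + 1) - S k) = ∑ _k ∈ T, (-1 : ℤ) :=
      Finset.sum_congr rfl (fun k hk => by
        rw [hT, Finset.mem_filter] at hk
        exact hk.2)
    rw [he]; simp
  have hT'e : ∑ k ∈ T', (S (k + 1) - S k) = (T'.card : ℤ) := by
    have he : ∑ k ∈ T', (S (k + 1) - S k) = ∑ _k ∈ T', (1 : ℤ) :=
      Finset.sum_congr rfl (fun k hk => by
        rw [hT', Finset.mem_filter, Finset.mem_range] at hk
        rcases hstep k hk.1 with h | h
        · exact h
        · exact absurd h hk.2)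
    rw [he]; simp
  have hcards : T.card + T'.card = 4 * n := by
    rw [hT, hT']
    rw [Finset.card_filter_add_card_filter_not]
    exact Finset.card_range _
  have hcard : T.card = 2 * n := by
    rw [htel, hTe, hT'e] at hsplit1
    omega
  -- split the weighted sum
  have hsplit2 : (∑ k ∈ T, (k : ℤ) * (S (k + 1) - S k))
      + (∑ k ∈ T', (k : ℤ) * (S (k + 1) - S k))
      = ∑ k ∈ Finset.range (4 * n), (k : ℤ) * (S (k + 1) - S k) := by
    rw [hT, hT']
    exact Finset.sum_filter_add_sum_filter_not _ _ _
  have hTw : ∑ k ∈ T, (k : ℤ) * (S (k + 1) - S k) = -∑ k ∈ T, (k : ℤ) := by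
    rw [← Finset.sum_neg_distrib]
    apply Finset.sum_congr rfl
    intro k hk
    rw [hT, Finset.mem_filter] at hk
    rw [hk.2]; ring
  have hT'w : ∑ k ∈ T', (k : ℤ) * (S (k + 1) - S k) = ∑ k ∈ T', (k : ℤ) := by
    apply Finset.sum_congr rfl
    intro k hk
    rw [hT', Finset.mem_filter, Finset.mem_range] at hk
    rcases hstep k hk.1 with h | h
    · rw [h]; ring
    · exact absurd h hk.2
  have hsums : (∑ k ∈ T, (k : ℤ)) + (∑ k ∈ T', (k : ℤ))
      = ∑ k ∈ Finset.range (4 * n), (k : ℤ) := by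
    rw [hT, hT']
    exact Finset.sum_filter_add_sum_filter_not _ _ _
  -- conclude 2 * ∑_T k = ∑_range k  (in ℤ)
  have hkey : 2 * (∑ k ∈ T, (k : ℤ)) = ∑ k ∈ Finset.range (4 * n), (k : ℤ) := by
    rw [hw, hTw, hT'w] at hsplit2
    linarith
  -- cast to ℕ
  have hcastT : (∑ k ∈ T, (k : ℤ)) = ((∑ t ∈ T, t : ℕ) : ℤ) := by
    push_cast; rfl
  have hcastR : (∑ k ∈ Finset.range (4 * n), (k : ℤ))
      = ((∑ k ∈ Finset.range (4 * n), k : ℕ) : ℤ) := by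
    push_cast; rfl
  have hnat : 2 * (∑ t ∈ T, t) = ∑ k ∈ Finset.range (4 * n), k := by
    have := hkey
    rw [hcastT, hcastR] at this
    exact_mod_cast this
  have hgauss : (∑ k ∈ Finset.range (4 * n), k) * 2 = 4 * n * (4 * n - 1) :=
    Finset.sum_range_id_mul_two (4 * n)
  have hsum : (∑ t ∈ T, t) = n * (4 * n - 1) := by
    have h4 : 4 * (∑ t ∈ T, t) = 4 * (n * (4 * n - 1)) := by
      have : 4 * n * (4 * n - 1) = 4 * (n * (4 * n - 1)) := by ring
      omega
    omega
  refine ⟨?_, hcard, hsum, ?_⟩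
  · intro t ht
    rw [hT, Finset.mem_filter, Finset.mem_range] at ht
    have ht0 : t ≠ 0 := by
      intro h
      rw [h, hS1, h0] at ht
      omega
    rw [Finset.mem_Icc]
    omega
  · rw [hsum]
    obtain ⟨m, rfl⟩ : ∃ m, n = m + 1 := ⟨n - 1, by omega⟩
    have he : (m + 1) * (4 * (m + 1) - 1) = 3 * (m + 1) + m * (4 * (m + 1)) := by
      have h1 : 4 * (m + 1) - 1 = 4 * m + 3 := by omega
      rw [h1]; ring
    rw [he]
    show (3 * (m + 1) + m * (4 * (m + 1))) % (4 * (m + 1)) = (3 * (m + 1)) % (4 * (m + 1))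
    exact Nat.add_mul_mod_self_right _ _ _
end

section
/- For n ≥ 1, the number of multisets {m_1, …, m_{2n}} of size 2n with entries in {0, 1, …, 2n-1} whose sum is ≡ 0 (mod 2n) equals the number of subsets of {1, …, 4n-1} of size 2n whose sum is ≡ n or 3n (mod 4n). -/
lemma fin_gap {k : ℕ} {f : Fin k → ℕ} (hf : StrictMono f) :
    ∀ (d : ℕ) (i j : Fin k), (i : ℕ) + d = (j : ℕ) → f i + d ≤ f j := by
  intro d
  induction d with
  | zero =>
    intro i j h
    have : i = j := Fin.ext (by omega)
    simp [this]
  | succ d ih =>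
    intro i j h
    have hj' : (i : ℕ) + d < k := by omega
    have h1 := ih i ⟨(i : ℕ) + d, hj'⟩ rfl
    have h2 : f ⟨(i : ℕ) + d, hj'⟩ < f j := hf (by rw [Fin.lt_def]; simp; omega)
    omega

lemma sum_shift (n : ℕ) : ∑ i : Fin (2*n), ((i : ℕ) + 1) = 2*n*n + n := by
  rw [Fin.sum_univ_eq_sum_range (fun i => i + 1) (2*n)]
  have h2 : (∑ i ∈ Finset.range (2*n), (i+1)) = ∑ i ∈ Finset.range (2*n+1), i := by
    rw [Finset.sum_range_succ' (fun i => i) (2*n)]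
    simp
  rw [h2]
  have h3 := Finset.sum_range_id_mul_two (2*n+1)
  have h5 : (∑ i ∈ Finset.range (2*n+1), i) * 2 = (2*n*n + n) * 2 := by
    rw [h3, Nat.add_sub_cancel]; ring
  exact Nat.eq_of_mul_eq_mul_right two_pos h5

lemma aux_mod (n S : ℕ) (hn : 1 ≤ n) :
    S % (2*n) = 0 ↔
      ((S + (2*n*n + n)) % (4*n) = n % (4*n) ∨
       (S + (2*n*n + n)) % (4*n) = (3*n) % (4*n)) := by
  have hn4 : n % (4*n) = n := Nat.mod_eq_of_lt (by omega)
  have hn3 : (3*n) % (4*n) = 3*n := Nat.mod_eq_of_lt (by omega)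
  rw [hn4, hn3]
  constructor
  · intro h
    obtain ⟨q, hq⟩ := Nat.dvd_of_mod_eq_zero h
    rcases Nat.even_or_odd (q + n) with ⟨r, hr⟩ | ⟨r, hr⟩
    · left
      have he : S + (2*n*n + n) = n + 4*n*r := by rw [hq]; nlinarith [hr]
      rw [he, Nat.add_mul_mod_self_left, hn4]
    · right
      have he : S + (2*n*n + n) = 3*n + 4*n*r := by rw [hq]; nlinarith [hr]
      rw [he, Nat.add_mul_mod_self_left, hn3]
  · intro h
    have hdvd : (2*n) ∣ S := by
      rcases h with h | h
      · have hdm := Nat.div_add_mod (S + (2*n*n + n)) (4*n)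
        rw [h] at hdm
        set t := (S + (2*n*n + n)) / (4*n) with ht
        have hS : S + 2*n*n = 4*n*t := by omega
        have h1 : (2*n) ∣ (S + 2*n*n) := ⟨2*t, by rw [hS]; ring⟩
        have h2 : (2*n) ∣ (2*n*n) := ⟨n, rfl⟩
        have h3 := Nat.dvd_sub h1 h2
        simpa using h3
      · have hdm := Nat.div_add_mod (S + (2*n*n + n)) (4*n)
        rw [h] at hdm
        set t := (S + (2*n*n + n)) / (4*n) with ht
        have hS : S + 2*n*n = 4*n*t + 2*n := by omega
        have h1 : (2*n) ∣ (S + 2*n*n) := ⟨2*t + 1, by rw [hS]; ring⟩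
        have h2 : (2*n) ∣ (2*n*n) := ⟨n, rfl⟩
        have h3 := Nat.dvd_sub h1 h2
        simpa using h3
    obtain ⟨c, rfl⟩ := hdvd
    exact Nat.mul_mod_right _ _

/-- The number of multisets of size `2n` with entries in `{0,…,2n-1}` whose sum
is `≡ 0 (mod 2n)` (encoded as weakly increasing `2n`-tuples valued in `Fin (2n)`)
equals the number of subsets of `{1,…,4n-1}` of size `2n` whose sum is
`≡ n` or `≡ 3n (mod 4n)`. -/
theorem stmt_5 (n : ℕ) (hn : 1 ≤ n) :
    {m : Fin (2 * n) → Fin (2 * n) |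
        Monotone m ∧ (∑ i, (m i : ℕ)) % (2 * n) = 0}.ncard =
    {A : Finset ℕ | A ⊆ Finset.Icc 1 (4 * n - 1) ∧ A.card = 2 * n ∧
        ((∑ a ∈ A, a) % (4 * n) = n % (4 * n) ∨
         (∑ a ∈ A, a) % (4 * n) = (3 * n) % (4 * n))}.ncard := by
  classical
  set f : (Fin (2*n) → Fin (2*n)) → Finset ℕ :=
    fun m => Finset.image (fun i : Fin (2*n) => (m i : ℕ) + (i : ℕ) + 1) Finset.univ with hf
  have hsm : ∀ {m : Fin (2*n) → Fin (2*n)}, Monotone m →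
      StrictMono (fun i : Fin (2*n) => (m i : ℕ) + (i : ℕ) + 1) := by
    intro m hm i j hij
    have h1 : (m i : ℕ) ≤ (m j : ℕ) := hm hij.le
    have h2 : (i : ℕ) < (j : ℕ) := hij
    show (m i : ℕ) + (i : ℕ) + 1 < (m j : ℕ) + (j : ℕ) + 1
    omega
  have hcardim : ∀ {m : Fin (2*n) → Fin (2*n)}, Monotone m → (f m).card = 2*n := by
    intro m hm
    rw [hf]
    rw [Finset.card_image_of_injective _ (hsm hm).injective, Finset.card_univ, Fintype.card_fin]
  have hsumim : ∀ {m : Fin (2*n) → Fin (2*n)}, Monotone m →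
      ∑ a ∈ f m, a = (∑ i, (m i : ℕ)) + (2*n*n + n) := by
    intro m hm
    rw [hf]
    rw [Finset.sum_image (fun i _ j _ h => (hsm hm).injective h)]
    rw [show (fun i : Fin (2*n) => (m i : ℕ) + (i : ℕ) + 1) =
        (fun i : Fin (2*n) => (m i : ℕ) + ((i : ℕ) + 1)) from funext fun i => by ring]
    rw [Finset.sum_add_distrib, sum_shift n]
  have key : {A : Finset ℕ | A ⊆ Finset.Icc 1 (4 * n - 1) ∧ A.card = 2 * n ∧
        ((∑ a ∈ A, a) % (4 * n) = n % (4 * n) ∨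
         (∑ a ∈ A, a) % (4 * n) = (3 * n) % (4 * n))} =
      f '' {m : Fin (2 * n) → Fin (2 * n) |
        Monotone m ∧ (∑ i, (m i : ℕ)) % (2 * n) = 0} := by
    ext A
    simp only [Set.mem_image, Set.mem_setOf_eq]
    constructor
    · rintro ⟨hsub, hcard, hsum⟩
      set a := A.orderEmbOfFin hcard with ha
      have hmem : ∀ i, a i ∈ A := fun i => A.orderEmbOfFin_mem hcard i
      have hamono : StrictMono a := (A.orderEmbOfFin hcard).strictMono
      have hbound : ∀ i : Fin (2*n), 1 ≤ a i ∧ a i ≤ 4*n - 1 := by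
        intro i
        have := hsub (hmem i)
        simpa [Finset.mem_Icc] using this
      have h2n : 0 < 2*n := by omega
      have hlow : ∀ i : Fin (2*n), (i : ℕ) + 1 ≤ a i := by
        intro i
        have hg := fin_gap hamono (i : ℕ) ⟨0, h2n⟩ i (by simp)
        have h0 := (hbound ⟨0, h2n⟩).1
        omega
      have hhigh : ∀ i : Fin (2*n), a i ≤ 2*n + (i : ℕ) := by
        intro i
        have hlast : (2*n - 1 : ℕ) < 2*n := by omega
        have hi := i.isLt
        have hg := fin_gap hamono ((2*n - 1) - (i : ℕ)) i ⟨2*n - 1, hlast⟩ (by simp; omega)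
        have hb := (hbound ⟨2*n - 1, hlast⟩).2
        omega
      set m : Fin (2*n) → Fin (2*n) := fun i =>
        (⟨a i - ((i : ℕ) + 1), by have := hhigh i; have := hlow i; omega⟩ : Fin (2*n)) with hm
      have hmval : ∀ i, (m i : ℕ) = a i - ((i : ℕ) + 1) := fun i => rfl
      have hcoe : ∀ i, (m i : ℕ) + (i : ℕ) + 1 = a i := by
        intro i
        have h1 := hlow i
        have h2 := hmval i
        omega
      have hmono : Monotone m := by
        intro i j hij
        have hij' : (i : ℕ) ≤ (j : ℕ) := hij
        have hg := fin_gap hamono ((j : ℕ) - (i : ℕ)) i j (by omega)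
        have hl := hlow i
        have e1 := hmval i
        have e2 := hmval j
        rw [Fin.le_def]
        omega
      have himg : f m = A := by
        rw [hf]
        ext x
        simp only [Finset.mem_image, Finset.mem_univ, true_and]
        constructor
        · rintro ⟨i, rfl⟩
          show ((m i : ℕ) + (i : ℕ) + 1) ∈ A
          rw [hcoe i]
          exact hmem i
        · intro hx
          have hr : x ∈ Set.range a := by
            rw [ha, Finset.range_orderEmbOfFin]; exact hx
          obtain ⟨i, hi⟩ := hr
          exact ⟨i, by show (m i : ℕ) + (i : ℕ) + 1 = x; rw [hcoe i, hi]⟩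
      refine ⟨m, ⟨hmono, ?_⟩, himg⟩
      have hsA := hsumim hmono
      rw [himg] at hsA
      rw [aux_mod n _ hn, ← hsA]
      exact hsum
    · rintro ⟨m, ⟨hmono, hsum⟩, rfl⟩
      refine ⟨?_, hcardim hmono, ?_⟩
      · intro x hx
        rw [hf] at hx
        simp only [Finset.mem_image, Finset.mem_univ, true_and] at hx
        obtain ⟨i, rfl⟩ := hx
        have h1 : (m i : ℕ) < 2*n := (m i).isLt
        have h2 : (i : ℕ) < 2*n := i.isLt
        simp only [Finset.mem_Icc]
        omega
      · rw [hsumim hmono, ← aux_mod n _ hn]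
        exact hsum
  rw [key]
  rw [Set.ncard_image_of_injOn]
  intro m1 hm1 m2 hm2 heq
  obtain ⟨hmono1, -⟩ := hm1
  obtain ⟨hmono2, -⟩ := hm2
  have hcard1 : (f m1).card = 2*n := hcardim hmono1
  have hmem1 : ∀ i : Fin (2*n), (fun i : Fin (2*n) => (m1 i : ℕ) + (i : ℕ) + 1) i ∈ f m1 := by
    intro i; rw [hf]
    exact Finset.mem_image_of_mem _ (Finset.mem_univ i)
  have hmem2 : ∀ i : Fin (2*n), (fun i : Fin (2*n) => (m2 i : ℕ) + (i : ℕ) + 1) i ∈ f m1 := by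
    intro i; rw [heq, hf]
    exact Finset.mem_image_of_mem _ (Finset.mem_univ i)
  have e1 := Finset.orderEmbOfFin_unique hcard1 hmem1 (hsm hmono1)
  have e2 := Finset.orderEmbOfFin_unique hcard1 hmem2 (hsm hmono2)
  funext i
  have hgi := congrFun (e1.trans e2.symm) i
  exact Fin.ext (by omega)
end

section
/- Let (A_n)_{n≥0} with A_0 = 1 satisfy A_n = ∑_{k=1}^n B_k A_{n-k} for all n ≥ 1, where B_k ≥ 0 are given ('irreducible counts'). Define A_n' = ∑_{k=1}^n k · B_k · A_{n-k}. Then n · A_n = ∑_{k=1}^n A_k' A_{n-k} for all n ≥ 0. -/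
/-- Marking lemma for renewal sequences: if `A_0 = 1` and
`A_n = ∑_{k=1}^n B_k A_{n-k}` for `n ≥ 1`, and
`A'_n = ∑_{k=1}^n k · B_k · A_{n-k}`, then
`n · A_n = ∑_{k=1}^n A'_k A_{n-k}` for all `n ≥ 0`. -/
theorem stmt_10 (A B : ℕ → ℕ) (hA0 : A 0 = 1)
    (hren : ∀ n, 1 ≤ n → A n = ∑ k ∈ Finset.Icc 1 n, B k * A (n - k))
    (A' : ℕ → ℕ)
    (hA' : ∀ n, A' n = ∑ k ∈ Finset.Icc 1 n, k * B k * A (n - k)) :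
    ∀ n, n * A n = ∑ k ∈ Finset.Icc 1 n, A' k * A (n - k) := by
  intro n
  induction n using Nat.strong_induction_on with
  | _ n ih =>
  rcases Nat.eq_zero_or_pos n with h0 | hn
  · simp [h0]
  · rw [hren n hn, Finset.mul_sum]
    have step : ∀ k ∈ Finset.Icc 1 n,
        n * (B k * A (n - k)) =
          k * B k * A (n - k) + ∑ j ∈ Finset.Icc 1 (n - k), B k * (A' j * A (n - k - j)) := by
      intro k hk
      simp only [Finset.mem_Icc] at hk
      have hlt : n - k < n := by omega
      have hn' : n = k + (n - k) := by omega
      have : n * (B k * A (n - k)) = k * B k * A (n - k) + B k * ((n - k) * A (n - k)) := by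
        calc n * (B k * A (n - k)) = (k + (n - k)) * (B k * A (n - k)) := by rw [← hn']
          _ = _ := by ring
      rw [this, ih (n - k) hlt, Finset.mul_sum]
    rw [Finset.sum_congr rfl step, Finset.sum_add_distrib, ← hA']
    -- swap the double sum
    have hswap : ∑ k ∈ Finset.Icc 1 n, ∑ j ∈ Finset.Icc 1 (n - k), B k * (A' j * A (n - k - j))
        = ∑ j ∈ Finset.Icc 1 n, ∑ k ∈ Finset.Icc 1 (n - j), B k * (A' j * A (n - k - j)) := by
      apply Finset.sum_comm'
      intro k j
      simp only [Finset.mem_Icc]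
      omega
    rw [hswap]
    have hinner : ∀ j ∈ Finset.Icc 1 n,
        ∑ k ∈ Finset.Icc 1 (n - j), B k * (A' j * A (n - k - j))
          = A' j * A (n - j) - A' j * (if j = n then 1 else 0) := by
      intro j hj
      simp only [Finset.mem_Icc] at hj
      rcases eq_or_lt_of_le hj.2 with hjn | hjn
      · subst hjn
        simp [hA0]
      · have h1 : 1 ≤ n - j := by omega
        have : ∑ k ∈ Finset.Icc 1 (n - j), B k * (A' j * A (n - k - j))
            = A' j * ∑ k ∈ Finset.Icc 1 (n - j), B k * A (n - j - k) := by
          rw [Finset.mul_sum]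
          apply Finset.sum_congr rfl
          intro k hk
          have : n - k - j = n - j - k := by omega
          rw [this]; ring
        rw [this, ← hren (n - j) h1]
        simp [Nat.ne_of_lt hjn]
    rw [Finset.sum_congr rfl hinner]
    have key : ∑ j ∈ Finset.Icc 1 n, (A' j * A (n - j) - A' j * (if j = n then 1 else 0))
        = (∑ j ∈ Finset.Icc 1 n, A' j * A (n - j)) - A' n := by
      rw [Finset.sum_tsub_distrib]
      · congr 1
        simp only [mul_ite, mul_one, mul_zero]
        rw [Finset.sum_ite_eq' (Finset.Icc 1 n) n (fun j => A' j)]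
        simp only [Finset.mem_Icc]
        have : 1 ≤ n ∧ n ≤ n := ⟨hn, le_rfl⟩
        simp [this]
      · intro j hj
        split
        · next h => subst h; simp [hA0]
        · simp
    rw [key]
    have hle : A' n ≤ ∑ j ∈ Finset.Icc 1 n, A' j * A (n - j) := by
      have : A' n * A (n - n) ≤ ∑ j ∈ Finset.Icc 1 n, A' j * A (n - j) :=
        Finset.single_le_sum (f := fun j => A' j * A (n - j)) (fun j _ => Nat.zero_le _)
          (by simp [Finset.mem_Icc]; omega)
      simpa [hA0] using this
    omega
end

section
/- For the sequence Ξ_n = (1/(4n)) ∑_{d | 2n} C(4n/d - 1, 2n/d) φ(d), the summand with d = 1 dominates: Ξ_n / [ (1/(4n)) C(4n-1, 2n) ] → 1 as n → ∞, and consequently n^{3/2} Ξ_n / 2^{4n} → 1/(8√(2π)). -/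
open Filter

/-- von Sterneck's count `Ξ_n = (1/(4n)) ∑_{d ∣ 2n} C(4n/d - 1, 2n/d) φ(d)`,
as a real number. -/
noncomputable def XiR (n : ℕ) : ℝ :=
  (1 / (4 * (n : ℝ))) * ∑ d ∈ (2 * n).divisors,
    ((4 * n / d - 1).choose (2 * n / d) : ℝ) * (d.totient : ℝ)


lemma choose_le_two_pow' (m k : ℕ) : m.choose k ≤ 2 ^ m := by
  rcases le_or_gt k m with h | h
  · calc m.choose k ≤ ∑ i ∈ Finset.range (m+1), m.choose i :=
        Finset.single_le_sum (fun i _ => Nat.zero_le _) (Finset.mem_range.2 (Nat.lt_succ_of_le h))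
    _ = 2 ^ m := Nat.sum_range_choose m
  · simp [Nat.choose_eq_zero_of_lt h]

lemma stirling_key (n : ℕ) (hn : 1 ≤ n) :
    Stirling.stirlingSeq (2*n) / (Stirling.stirlingSeq n)^2
      = Real.sqrt n * Nat.centralBinom n / 4^n := by
  have hn0 : (0:ℝ) < n := by exact_mod_cast hn
  have he : (0:ℝ) < Real.exp 1 := Real.exp_pos 1
  have hb : ((Nat.factorial (2*n)) : ℝ) = Nat.centralBinom n * ((Nat.factorial n : ℝ))^2 := by
    have := Nat.choose_mul_factorial_mul_factorial (show n ≤ 2*n by omega)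
    rw [Nat.centralBinom]
    have h2 : 2*n - n = n := by omega
    rw [h2] at this
    push_cast [← this]; ring
  have hs2 : Real.sqrt (2*(2*(n:ℝ))) = 2 * Real.sqrt n := by
    rw [show 2*(2*(n:ℝ)) = 2^2 * n by ring, Real.sqrt_mul (by positivity),
      Real.sqrt_sq (by norm_num)]
  have h3 : ((2*(n:ℝ))/Real.exp 1)^(2*n) = 4^n * (((n:ℝ)/Real.exp 1)^n)^2 := by
    rw [show (2*(n:ℝ))/Real.exp 1 = 2*((n:ℝ)/Real.exp 1) by ring, mul_pow, ← pow_mul',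
      show (2:ℝ)^(2*n) = 4^n by rw [pow_mul]; norm_num]
  have hfac : (0:ℝ) < (Nat.factorial n : ℝ) := by exact_mod_cast Nat.factorial_pos n
  have hE : (0:ℝ) < ((n:ℝ)/Real.exp 1)^n := by positivity
  have hsq : Real.sqrt n * Real.sqrt n = n := Real.mul_self_sqrt hn0.le
  have hs2' : (0:ℝ) < Real.sqrt (2*(n:ℝ)) := Real.sqrt_pos.2 (by positivity)
  have hsn : (0:ℝ) < Real.sqrt n := Real.sqrt_pos.2 hn0
  simp only [Stirling.stirlingSeq]
  push_cast
  rw [hb, hs2, h3]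
  field_simp
  rw [Real.sq_sqrt (by positivity), Real.sq_sqrt hn0.le]
  ring

lemma central_tendsto'
    (stirling_key : ∀ n : ℕ, 1 ≤ n →
      Stirling.stirlingSeq (2*n) / (Stirling.stirlingSeq n)^2
        = Real.sqrt n * Nat.centralBinom n / 4^n) :
    Tendsto (fun n : ℕ => Real.sqrt n * Nat.centralBinom n / 4^n) atTop
      (nhds (Real.sqrt Real.pi)⁻¹) := by
  have hπ : (0:ℝ) < Real.sqrt Real.pi := Real.sqrt_pos.2 Real.pi_pos
  have h2 : Tendsto (fun n : ℕ => 2*n) atTop atTop :=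
    tendsto_atTop_atTop_of_monotone (fun a b h => by omega) (fun b => ⟨b, by omega⟩)
  have hA : Tendsto (fun n : ℕ => Stirling.stirlingSeq (2*n)) atTop (nhds (Real.sqrt Real.pi)) :=
    Stirling.tendsto_stirlingSeq_sqrt_pi.comp h2
  have hB : Tendsto (fun n : ℕ => (Stirling.stirlingSeq n)^2) atTop (nhds ((Real.sqrt Real.pi)^2)) :=
    Stirling.tendsto_stirlingSeq_sqrt_pi.pow 2
  have hD := hA.div hB (by positivity)
  have hval : Real.sqrt Real.pi / (Real.sqrt Real.pi)^2 = (Real.sqrt Real.pi)⁻¹ := by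
    field_simp
  rw [hval] at hD
  exact hD.congr' (by filter_upwards [eventually_ge_atTop 1] with n hn; exact stirling_key n hn)



lemma double_choose (n : ℕ) (hn : 1 ≤ n) :
    (4*n).choose (2*n) = 2 * ((4*n-1).choose (2*n)) := by
  have e1 : 4*n = (4*n-1)+1 := by omega
  have e2 : 2*n = (2*n-1)+1 := by omega
  have hsymm : (4*n-1).choose (2*n-1) = (4*n-1).choose (2*n) := by
    have := Nat.choose_symm (show 2*n ≤ 4*n-1 by omega)
    rwa [show 4*n-1-(2*n) = 2*n-1 by omega] at this
  calc (4*n).choose (2*n) = ((4*n-1)+1).choose ((2*n-1)+1) := by rw [← e1, ← e2]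
    _ = (4*n-1).choose (2*n-1) + (4*n-1).choose ((2*n-1)+1) := Nat.choose_succ_succ _ _
    _ = 2 * ((4*n-1).choose (2*n)) := by rw [hsymm, ← e2]; ring

lemma key_bounds (n : ℕ) (hn : 2 ≤ n) :
    1 ≤ XiR n / ((1 / (4 * (n : ℝ))) * ((4 * n - 1).choose (2 * n) : ℝ)) ∧
    XiR n / ((1 / (4 * (n : ℝ))) * ((4 * n - 1).choose (2 * n) : ℝ))
      ≤ 1 + 16 * ((n:ℝ)^3 / 4^n) := by
  have hn0 : (0:ℝ) < n := by exact_mod_cast (by omega : 0 < n)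
  set C : ℝ := ((4*n-1).choose (2*n) : ℝ) with hC
  set f : ℕ → ℝ := fun d => ((4 * n / d - 1).choose (2 * n / d) : ℝ) * (d.totient : ℝ) with hf
  set R : ℝ := ∑ d ∈ ((2*n).divisors.erase 1), f d with hR
  have hCpos : (0:ℝ) < C := by
    have : 0 < (4*n-1).choose (2*n) := Nat.choose_pos (by omega)
    rw [hC]; exact_mod_cast this
  -- lower bound on C
  have hClb : (16:ℝ)^n / (4*n) ≤ C := by
    have h1 := Nat.four_pow_lt_mul_centralBinom (2*n) (by omega)
    rw [Nat.centralBinom, show 2*(2*n) = 4*n by ring, double_choose n (by omega)] at h1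
    have h2 : (4:ℝ)^(2*n) ≤ (2*n) * (2 * C) := by rw [hC]; exact_mod_cast h1.le
    rw [div_le_iff₀ (by positivity)]
    calc (16:ℝ)^n = 4^(2*n) := by rw [pow_mul]; norm_num
      _ ≤ (2*n) * (2*C) := h2
      _ = C * (4*n) := by ring
  -- sum splitting
  have h1mem : 1 ∈ (2*n).divisors := Nat.one_mem_divisors.2 (by omega)
  have hsum : ∑ d ∈ (2*n).divisors, f d = C + R := by
    rw [← Finset.add_sum_erase _ f h1mem, ← hR]
    congr 1
    simp [hf, hC]
  have hQeq : XiR n / ((1 / (4 * (n:ℝ))) * C) = 1 + R / C := by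
    rw [XiR, ← hf, hsum, mul_div_mul_left _ _ (by positivity : (1:ℝ)/(4*n) ≠ 0),
      add_div, div_self hCpos.ne']
  -- R bounds
  have hRnn : 0 ≤ R := Finset.sum_nonneg (fun d _ => by positivity)
  have hRub : R ≤ (2*(n:ℝ)) * ((4:ℝ)^n * (2*n)) := by
    have hterm : ∀ d ∈ (2*n).divisors.erase 1, f d ≤ (4:ℝ)^n * (2*n) := by
      intro d hd
      have hd1 : d ≠ 1 := (Finset.mem_erase.1 hd).1
      have hdm := Finset.mem_of_mem_erase hd
      have hdpos : 0 < d := Nat.pos_of_mem_divisors hdm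
      have hdle : d ≤ 2*n := Nat.divisor_le hdm
      have hd2 : 2 ≤ d := by omega
      have hdiv : 4*n/d ≤ 2*n := by
        calc 4*n/d ≤ 4*n/2 := Nat.div_le_div_left hd2 (by omega)
          _ = 2*n := by omega
      have hch : ((4*n/d - 1).choose (2*n/d) : ℝ) ≤ (4:ℝ)^n := by
        have b1 : (4*n/d - 1).choose (2*n/d) ≤ 2^(4*n/d - 1) := choose_le_two_pow' _ _
        have b2 : (2:ℕ)^(4*n/d - 1) ≤ 2^(2*n) := Nat.pow_le_pow_right (by omega) (by omega)
        have : (4*n/d - 1).choose (2*n/d) ≤ 2^(2*n) := b1.trans b2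
        calc ((4*n/d - 1).choose (2*n/d) : ℝ) ≤ ((2:ℕ)^(2*n) : ℝ) := by exact_mod_cast this
          _ = (4:ℝ)^n := by push_cast; rw [pow_mul]; norm_num
      have htot : ((d.totient : ℝ)) ≤ 2*(n:ℝ) := by
        have : d.totient ≤ 2*n := (Nat.totient_le d).trans hdle
        exact_mod_cast this
      calc f d ≤ (4:ℝ)^n * (2*(n:ℝ)) := by
            apply mul_le_mul hch htot (by positivity) (by positivity)
        _ = (4:ℝ)^n * (2*n) := by push_cast; ring
    have hcard : ((2*n).divisors.erase 1).card ≤ 2*n := by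
      have hsub : (2*n).divisors.erase 1 ⊆ Finset.Icc 1 (2*n) := by
        intro d hd
        have hdm := Finset.mem_of_mem_erase hd
        exact Finset.mem_Icc.2 ⟨Nat.pos_of_mem_divisors hdm, Nat.divisor_le hdm⟩
      calc ((2*n).divisors.erase 1).card ≤ (Finset.Icc 1 (2*n)).card := Finset.card_le_card hsub
        _ = 2*n := by rw [Nat.card_Icc]; omega
    calc R ≤ ((2*n).divisors.erase 1).card • ((4:ℝ)^n * (2*n)) :=
          Finset.sum_le_card_nsmul _ _ _ hterm
      _ = (((2*n).divisors.erase 1).card : ℝ) * ((4:ℝ)^n * (2*n)) := by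
          rw [nsmul_eq_mul]
      _ ≤ (2*(n:ℝ)) * ((4:ℝ)^n * (2*n)) := by
          apply mul_le_mul_of_nonneg_right _ (by positivity)
          exact_mod_cast hcard
  constructor
  · rw [hQeq]
    exact le_add_of_nonneg_right (div_nonneg hRnn hCpos.le)
  · rw [hQeq]
    have hdpos : (0:ℝ) < (16:ℝ)^n / (4*n) := by positivity
    have h3 : R / C ≤ ((2*(n:ℝ)) * ((4:ℝ)^n * (2*n))) / ((16:ℝ)^n / (4*n)) :=
      div_le_div₀ (by positivity) hRub hdpos hClb
    have h4 : ((2*(n:ℝ)) * ((4:ℝ)^n * (2*n))) / ((16:ℝ)^n / (4*n)) = 16 * ((n:ℝ)^3 / 4^n) := by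
      have h16 : (16:ℝ)^n = 4^n * 4^n := by rw [← pow_add, ← two_mul]; rw [pow_mul]; norm_num
      rw [h16]
      field_simp
      ring
    linarith [h3, h4 ▸ h3]

lemma partA : Tendsto (fun n : ℕ =>
    XiR n / ((1 / (4 * (n : ℝ))) * ((4 * n - 1).choose (2 * n) : ℝ)))
    atTop (nhds 1) := by
  have hup : Tendsto (fun n : ℕ => 1 + 16 * ((n:ℝ)^3 / 4^n)) atTop (nhds 1) := by
    have h0 := (tendsto_pow_const_div_const_pow_of_one_lt 3
      (by norm_num : (1:ℝ) < 4)).const_mul (16:ℝ)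
    have h1 : Tendsto (fun _ : ℕ => (1:ℝ)) atTop (nhds 1) := tendsto_const_nhds
    simpa using h1.add h0
  refine tendsto_of_tendsto_of_tendsto_of_le_of_le' tendsto_const_nhds hup ?_ ?_
  · filter_upwards [eventually_ge_atTop 2] with n hn
    exact (key_bounds n hn).1
  · filter_upwards [eventually_ge_atTop 2] with n hn
    exact (key_bounds n hn).2

/-- The `d = 1` summand dominates in von Sterneck's formula:
`Ξ_n / ((1/(4n)) C(4n-1, 2n)) → 1`, and consequently
`n^{3/2} Ξ_n / 2^{4n} → 1/(8√(2π))`. -/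
theorem stmt_19 :
    Tendsto (fun n : ℕ =>
        XiR n / ((1 / (4 * (n : ℝ))) * ((4 * n - 1).choose (2 * n) : ℝ)))
      atTop (nhds 1) ∧
    Tendsto (fun n : ℕ => (n : ℝ) ^ ((3 : ℝ) / 2) * XiR n / 2 ^ (4 * n))
      atTop (nhds (1 / (8 * Real.sqrt (2 * Real.pi)))) := by
  have hkey : ∀ n : ℕ, 1 ≤ n →
      Stirling.stirlingSeq (2*n) / (Stirling.stirlingSeq n)^2
        = Real.sqrt n * Nat.centralBinom n / 4^n := stirling_key
  have hcb := central_tendsto' hkey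
  refine ⟨partA, ?_⟩
  have h2 : Tendsto (fun n : ℕ => 2*n) atTop atTop :=
    tendsto_atTop_atTop_of_monotone (fun a b h => by omega) (fun b => ⟨b, by omega⟩)
  have hcb2 : Tendsto (fun n : ℕ => Real.sqrt (2*n) * Nat.centralBinom (2*n) / 4^(2*n))
      atTop (nhds (Real.sqrt Real.pi)⁻¹) := by
    have := hcb.comp h2
    convert this using 2 with n
    simp [Function.comp]
  have hmain := partA.mul (hcb2.div_const (8 * Real.sqrt 2))
  have hval : (1:ℝ) * ((Real.sqrt Real.pi)⁻¹ / (8 * Real.sqrt 2))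
      = 1 / (8 * Real.sqrt (2 * Real.pi)) := by
    rw [Real.sqrt_mul (by norm_num : (0:ℝ) ≤ 2)]
    have h1 : (0:ℝ) < Real.sqrt 2 := Real.sqrt_pos.2 (by norm_num)
    have h2 : (0:ℝ) < Real.sqrt Real.pi := Real.sqrt_pos.2 Real.pi_pos
    field_simp
  rw [hval] at hmain
  refine hmain.congr' ?_
  filter_upwards [eventually_ge_atTop 2] with n hn
  have hn0 : (0:ℝ) < n := by exact_mod_cast (by omega : 0 < n)
  have hCpos : (0:ℝ) < ((4*n-1).choose (2*n) : ℝ) := by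
    exact_mod_cast Nat.choose_pos (show 2*n ≤ 4*n-1 by omega)
  have hcbC : (Nat.centralBinom (2*n) : ℝ) = 2 * ((4*n-1).choose (2*n) : ℝ) := by
    rw [Nat.centralBinom, show 2*(2*n) = 4*n by ring, double_choose n (by omega)]
    push_cast; ring
  have hs2n : Real.sqrt (2*(n:ℝ)) = Real.sqrt 2 * Real.sqrt n := by
    rw [Real.sqrt_mul (by norm_num : (0:ℝ) ≤ 2)]
  have hrpow : (n:ℝ) ^ ((3:ℝ)/2) = (n:ℝ) * Real.sqrt n := by
    rw [show (3:ℝ)/2 = 1 + 1/2 by norm_num, Real.rpow_add hn0, Real.rpow_one,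
      ← Real.sqrt_eq_rpow]
  have hpow : (2:ℝ) ^ (4*n) = 4 ^ (2*n) := by
    rw [show 4*n = 2*(2*n) by ring, pow_mul]; norm_num
  have hs2 : (0:ℝ) < Real.sqrt 2 := Real.sqrt_pos.2 (by norm_num)
  have hsn : (0:ℝ) < Real.sqrt n := Real.sqrt_pos.2 hn0
  have h4p : (0:ℝ) < (4:ℝ)^(2*n) := by positivity
  show XiR n / ((1 / (4 * (n:ℝ))) * ((4*n-1).choose (2*n) : ℝ))
      * (Real.sqrt (2*n) * Nat.centralBinom (2*n) / 4^(2*n) / (8 * Real.sqrt 2))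
    = (n:ℝ) ^ ((3:ℝ)/2) * XiR n / 2 ^ (4*n)
  rw [hcbC, hs2n, hrpow, hpow]
  have hsq : Real.sqrt n * Real.sqrt n = n := Real.mul_self_sqrt hn0.le
  field_simp
  ring_nf
end
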